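/- arXiv:2508.20132 — 10 statements merged into one kernel-verified Lean document; each statement's English description precedes it below -/
import Mathlib

section
/- If $\mathcal{F}$ is a finite family of sets each of size at most $k$, and $|\mathcal{F}| > k!\,(s-1)^k$, then $\mathcal{F}$ contains $s$ distinct sets $A_1, \ldots, A_s$ forming a sunflower, i.e., $A_i \cap A_j = \bigcap_{m=1}^{s} A_m$ for all $i \neq j$. -/
open Finset

/-- Erdős–Rado sunflower lemma: a family of sets of size at most `k` with more than
`k! * (s-1)^k` members contains `s` distinct sets whose pairwise intersections all
equal their common intersection (a `Δ(s)`-system, i.e. a sunflower with `s` petals). -/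
theorem erdos_rado_sunflower {α : Type*} [DecidableEq α] (k s : ℕ) (hk : 0 < k) (hs : 0 < s)
    (𝒻 : Finset (Finset α)) (hsize : ∀ A ∈ 𝒻, A.card ≤ k)
    (hcard : Nat.factorial k * (s - 1) ^ k < 𝒻.card) :
    ∃ S ⊆ 𝒻, S.card = s ∧ ∃ D : Finset α,
      (∀ A ∈ S, ∀ B ∈ S, A ≠ B → A ∩ B = D) ∧ (∀ A ∈ S, D ⊆ A) := by
  classical
  induction k using Nat.strong_induction_on generalizing 𝒻 with
  | _ k IH =>
  -- dispose of the case s = 1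
  rcases Nat.lt_or_ge s 2 with hs2 | hs2
  · have hs1 : s = 1 := by omega
    subst hs1
    have h0 : 0 < 𝒻.card := by
      have hz : (1 - 1 : ℕ) ^ k = 0 := by
        simp [zero_pow hk.ne']
      rw [hz, Nat.mul_zero] at hcard
      omega
    obtain ⟨A, hA⟩ := Finset.card_pos.mp h0
    refine ⟨{A}, by simpa using hA, by simp, A, ?_, by simp⟩
    intro X hX Y hY hXY
    simp only [mem_singleton] at hX hY
    exact absurd (hX.trans hY.symm) hXY
  -- maximal pairwise-disjoint subfamily
  set T : Finset (Finset (Finset α)) :=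
    𝒻.powerset.filter (fun M => ∀ A ∈ M, ∀ B ∈ M, A ≠ B → Disjoint A B) with hT
  have hTne : T.Nonempty := ⟨∅, by simp [hT]⟩
  obtain ⟨M, hMT, hMmax⟩ := T.exists_max_image Finset.card hTne
  have hM𝒻 : M ⊆ 𝒻 := mem_powerset.mp (mem_filter.mp hMT).1
  have hMdisj : ∀ A ∈ M, ∀ B ∈ M, A ≠ B → Disjoint A B := (mem_filter.mp hMT).2
  rcases Nat.lt_or_ge M.card s with hMs | hMs
  swap
  · -- M has at least s members: pairwise disjoint sunflower with empty core
    obtain ⟨S, hSM, hScard⟩ := Finset.exists_subset_card_eq hMs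
    refine ⟨S, hSM.trans hM𝒻, hScard, ∅, ?_, by simp⟩
    intro A hA B hB hAB
    exact disjoint_iff_inter_eq_empty.mp (hMdisj A (hSM hA) B (hSM hB) hAB)
  -- k = 1 : impossible, since a family of ≤1-element sets is pairwise disjoint
  rcases Nat.lt_or_ge k 2 with hk2 | hk2
  · have hk1 : k = 1 := by omega
    subst hk1
    have h𝒻T : 𝒻 ∈ T := by
      rw [hT, mem_filter, mem_powerset]
      refine ⟨le_refl _, fun A hA B hB hAB => ?_⟩
      rw [Finset.disjoint_left]
      intro x hxA hxB
      have hA1 : A = {x} := by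
        have := hsize A hA
        have hx : {x} ⊆ A := singleton_subset_iff.mpr hxA
        exact (Finset.eq_of_subset_of_card_le hx (by simpa using this)).symm
      have hB1 : B = {x} := by
        have := hsize B hB
        have hx : {x} ⊆ B := singleton_subset_iff.mpr hxB
        exact (Finset.eq_of_subset_of_card_le hx (by simpa using this)).symm
      exact hAB (hA1.trans hB1.symm)
    have h1 := hMmax 𝒻 h𝒻T
    have : Nat.factorial 1 * (s - 1) ^ 1 = s - 1 := by simp [Nat.factorial]
    omega
  -- main case: k ≥ 2
  set Y : Finset α := M.biUnion id with hY
  have hmeet : ∀ A ∈ 𝒻, A.Nonempty → (Y ∩ A).Nonempty := by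
    intro A hA hAne
    by_cases hAM : A ∈ M
    · have hAY : A ⊆ Y := Finset.subset_biUnion_of_mem id hAM
      obtain ⟨x, hx⟩ := hAne
      exact ⟨x, mem_inter.mpr ⟨hAY hx, hx⟩⟩
    · by_contra hcon
      have hdisj : ∀ B ∈ M, Disjoint A B := by
        intro B hB
        rw [Finset.disjoint_left]
        intro x hxA hxB
        exact hcon ⟨x, mem_inter.mpr ⟨mem_biUnion.mpr ⟨B, hB, hxB⟩, hxA⟩⟩
      have hMT' : insert A M ∈ T := by
        rw [hT, mem_filter, mem_powerset]
        refine ⟨insert_subset hA hM𝒻, ?_⟩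
        intro X hX Z hZ hXZ
        rcases mem_insert.mp hX with rfl | hX' <;> rcases mem_insert.mp hZ with rfl | hZ'
        · exact absurd rfl hXZ
        · exact hdisj Z hZ'
        · exact (hdisj X hX').symm
        · exact hMdisj X hX' Z hZ' hXZ
      have := hMmax _ hMT'
      rw [Finset.card_insert_of_notMem hAM] at this
      omega
  -- degree function and double counting
  set d : α → ℕ := fun y => (𝒻.filter (fun A => y ∈ A)).card with hd
  set 𝒻₀ : Finset (Finset α) := 𝒻.erase ∅ with h𝒻₀
  have hsum : 𝒻₀.card ≤ ∑ y ∈ Y, d y := by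
    have h1 : ∑ y ∈ Y, d y = ∑ A ∈ 𝒻, (Y ∩ A).card := by
      simp only [hd, Finset.card_filter]
      rw [Finset.sum_comm]
      congr 1
      ext A
      rw [Finset.sum_ite_mem]
      simp
    rw [h1]
    calc 𝒻₀.card = ∑ A ∈ 𝒻₀, 1 := by simp
    _ ≤ ∑ A ∈ 𝒻₀, (Y ∩ A).card := by
        apply Finset.sum_le_sum
        intro A hA
        have hAne : A.Nonempty := by
          rw [Finset.nonempty_iff_ne_empty]
          exact (Finset.mem_erase.mp hA).1
        exact Finset.card_pos.mpr (hmeet A (Finset.erase_subset _ _ hA) hAne)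
    _ ≤ ∑ A ∈ 𝒻, (Y ∩ A).card := Finset.sum_le_sum_of_subset (Finset.erase_subset _ _)
  -- the core counting bound
  set B : ℕ := Nat.factorial (k - 1) * (s - 1) ^ (k - 1) with hB
  have hBpos : 0 < B := by
    apply Nat.mul_pos (Nat.factorial_pos _)
    exact Nat.pow_pos (by omega)
  have hkB : Nat.factorial k * (s - 1) ^ k = k * (s - 1) * B := by
    obtain ⟨m, rfl⟩ : ∃ m, k = m + 1 := ⟨k - 1, by omega⟩
    simp only [hB, Nat.add_sub_cancel, Nat.factorial_succ, pow_succ]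
    ring
  have hkey : Y.card * B < ∑ y ∈ Y, d y := by
    by_cases hem : ∅ ∈ 𝒻
    · -- then ∅ ∈ M, and Y has at most k*(s-2) elements
      have heM : ∅ ∈ M := by
        by_contra hcon
        have hMT' : insert ∅ M ∈ T := by
          rw [hT, mem_filter, mem_powerset]
          refine ⟨insert_subset hem hM𝒻, ?_⟩
          intro X hX Z hZ hXZ
          rcases mem_insert.mp hX with rfl | hX' <;> rcases mem_insert.mp hZ with rfl | hZ'
          · exact absurd rfl hXZ
          · exact Finset.disjoint_empty_left Z
          · exact Finset.disjoint_empty_right X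
          · exact hMdisj X hX' Z hZ' hXZ
        have := hMmax _ hMT'
        rw [Finset.card_insert_of_notMem hcon] at this
        omega
      have hYcard : Y.card ≤ (s - 2) * k := by
        calc Y.card ≤ ∑ A ∈ M, (id A).card := Finset.card_biUnion_le
        _ = ∑ A ∈ M.erase ∅, A.card := by
            rw [← Finset.add_sum_erase M _ heM]; simp
        _ ≤ (M.erase ∅).card * k := by
            rw [← smul_eq_mul]
            apply Finset.sum_le_card_nsmul
            intro A hA
            exact hsize A (hM𝒻 (Finset.erase_subset _ _ hA))
        _ ≤ (s - 2) * k := by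
            apply Nat.mul_le_mul_right
            rw [Finset.card_erase_of_mem heM]
            omega
      have h𝒻₀ : Nat.factorial k * (s - 1) ^ k ≤ 𝒻₀.card := by
        have h1 := Finset.pred_card_le_card_erase (s := 𝒻) (a := (∅ : Finset α))
        have h2 : 𝒻₀.card = (𝒻.erase ∅).card := rfl
        omega
      calc Y.card * B ≤ (s - 2) * k * B := Nat.mul_le_mul_right _ hYcard
      _ < k * (s - 1) * B := by
          refine (Nat.mul_lt_mul_right hBpos).mpr ?_
          have : s - 2 < s - 1 := by omega
          calc (s - 2) * k = k * (s - 2) := Nat.mul_comm _ _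
          _ < k * (s - 1) := mul_lt_mul_of_pos_left this (by omega)
      _ = Nat.factorial k * (s - 1) ^ k := hkB.symm
      _ ≤ 𝒻₀.card := h𝒻₀
      _ ≤ ∑ y ∈ Y, d y := hsum
    · -- 𝒻₀ = 𝒻
      have h𝒻₀ : 𝒻₀ = 𝒻 := Finset.erase_eq_of_notMem hem
      have hYcard : Y.card ≤ (s - 1) * k := by
        calc Y.card ≤ ∑ A ∈ M, (id A).card := Finset.card_biUnion_le
        _ ≤ M.card * k := by
            rw [← smul_eq_mul]
            apply Finset.sum_le_card_nsmul
            intro A hA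
            exact hsize A (hM𝒻 hA)
        _ ≤ (s - 1) * k := Nat.mul_le_mul_right _ (by omega)
      calc Y.card * B ≤ (s - 1) * k * B := Nat.mul_le_mul_right _ hYcard
      _ = Nat.factorial k * (s - 1) ^ k := by rw [hkB]; ring
      _ < 𝒻.card := hcard
      _ = 𝒻₀.card := by rw [h𝒻₀]
      _ ≤ ∑ y ∈ Y, d y := hsum
  -- pigeonhole: some element has large degree
  have hpig : ∃ y ∈ Y, B < d y := by
    by_contra hcon
    push_neg at hcon
    have : ∑ y ∈ Y, d y ≤ Y.card * B := by
      rw [← smul_eq_mul]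
      exact Finset.sum_le_card_nsmul _ _ _ hcon
    omega
  obtain ⟨y, hyY, hyB⟩ := hpig
  -- reduced family
  set 𝒢 : Finset (Finset α) := (𝒻.filter (fun A => y ∈ A)).image (fun A => A.erase y) with h𝒢
  have h𝒢card : 𝒢.card = d y := by
    rw [h𝒢, hd]
    apply Finset.card_image_of_injOn
    intro A hA A' hA' hAA'
    simp only at hAA'
    have hyA : y ∈ A := (mem_filter.mp hA).2
    have hyA' : y ∈ A' := (mem_filter.mp hA').2
    rw [← Finset.insert_erase hyA, ← Finset.insert_erase hyA', hAA']
  have h𝒢size : ∀ C ∈ 𝒢, C.card ≤ k - 1 := by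
    intro C hC
    obtain ⟨A, hA, rfl⟩ := mem_image.mp hC
    rw [Finset.card_erase_of_mem (mem_filter.mp hA).2]
    have := hsize A (mem_filter.mp hA).1
    omega
  have h𝒢y : ∀ C ∈ 𝒢, y ∉ C := by
    intro C hC
    obtain ⟨A, hA, rfl⟩ := mem_image.mp hC
    exact Finset.notMem_erase y A
  obtain ⟨S', hS'𝒢, hS'card, D', hD'inter, hD'sub⟩ :=
    IH (k - 1) (by omega) (by omega) 𝒢 h𝒢size (by rw [h𝒢card]; exact hyB)
  -- lift back by inserting y
  refine ⟨S'.image (insert y), ?_, ?_, insert y D', ?_, ?_⟩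
  · intro C hC
    obtain ⟨A', hA', rfl⟩ := mem_image.mp hC
    obtain ⟨A, hA, rfl⟩ := mem_image.mp (hS'𝒢 hA')
    rw [Finset.insert_erase (mem_filter.mp hA).2]
    exact (mem_filter.mp hA).1
  · rw [Finset.card_image_of_injOn, hS'card]
    intro A hA A' hA' hAA'
    have h1 : y ∉ A := h𝒢y A (hS'𝒢 hA)
    have h2 : y ∉ A' := h𝒢y A' (hS'𝒢 hA')
    rw [← Finset.erase_insert h1, ← Finset.erase_insert h2, hAA']
  · intro C1 hC1 C2 hC2 hne
    obtain ⟨A1, hA1, rfl⟩ := mem_image.mp hC1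
    obtain ⟨A2, hA2, rfl⟩ := mem_image.mp hC2
    have hA12 : A1 ≠ A2 := fun h => hne (by rw [h])
    have h1 : y ∉ A1 := h𝒢y A1 (hS'𝒢 hA1)
    have h2 : y ∉ A2 := h𝒢y A2 (hS'𝒢 hA2)
    have hii : insert y A1 ∩ insert y A2 = insert y (A1 ∩ A2) := by
      ext x
      simp only [mem_inter, mem_insert]
      tauto
    rw [hii, hD'inter A1 hA1 A2 hA2 hA12]
  · intro C hC
    obtain ⟨A, hA, rfl⟩ := mem_image.mp hC
    exact Finset.insert_subset_insert y (hD'sub A hA)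
end

section
/- For all nonnegative integers $a, b$ and positive integer $s$, one has $\phi(a+b, s) \geq \phi(a, s) \cdot \phi(b, s)$, i.e., given a family $\mathcal{A}$ of $a$-element sets with no $\Delta(s+1)$-system and a family $\mathcal{B}$ of $b$-element sets with no $\Delta(s+1)$-system, living on disjoint ground sets, the family $\mathcal{C} = \{A \cup B : A \in \mathcal{A}, B \in \mathcal{B}\}$ has size $|\mathcal{A}| \cdot |\mathcal{B}|$ and contains no $\Delta(s+1)$-system. -/
open Finset

/-- A `Δ(t)`-system inside a family: `t` distinct sets whose pairwise intersections
all equal their common intersection (the kernel). -/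
def HasDeltaSystem {α : Type*} [DecidableEq α] (𝒻 : Finset (Finset α)) (t : ℕ) : Prop :=
  ∃ S ⊆ 𝒻, S.card = t ∧ ∃ D : Finset α,
    (∀ A ∈ S, ∀ B ∈ S, A ≠ B → A ∩ B = D) ∧ (∀ A ∈ S, D ⊆ A)

/-- `φ(a+b,s) ≥ φ(a,s)·φ(b,s)`: if `𝒜` is a family of `a`-element subsets of `X` with no
`Δ(s+1)`-system, `ℬ` a family of `b`-element subsets of `Y` with no `Δ(s+1)`-system, and
`X`, `Y` are disjoint, then `{A ∪ B : A ∈ 𝒜, B ∈ ℬ}` has size `|𝒜|·|ℬ|` and contains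
no `Δ(s+1)`-system. -/
theorem phi_supermultiplicative {α : Type*} [DecidableEq α] (a b s : ℕ) (hs : 0 < s)
    (X Y : Finset α) (hXY : Disjoint X Y)
    (𝒜 ℬ : Finset (Finset α))
    (h𝒜 : ∀ A ∈ 𝒜, A ⊆ X ∧ A.card = a) (hℬ : ∀ B ∈ ℬ, B ⊆ Y ∧ B.card = b)
    (h𝒜s : ¬ HasDeltaSystem 𝒜 (s + 1)) (hℬs : ¬ HasDeltaSystem ℬ (s + 1)) :
    ((𝒜 ×ˢ ℬ).image fun p => p.1 ∪ p.2).card = 𝒜.card * ℬ.card ∧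
      ¬ HasDeltaSystem ((𝒜 ×ˢ ℬ).image fun p => p.1 ∪ p.2) (s + 1) := by
  have projX : ∀ A ∈ 𝒜, ∀ B ∈ ℬ, (A ∪ B) ∩ X = A := by
    intro A hA B hB
    rw [union_inter_distrib_right, inter_eq_left.mpr (h𝒜 A hA).1,
      disjoint_iff_inter_eq_empty.mp ((hXY.mono_right (hℬ B hB).1).symm), union_empty]
  have projY : ∀ A ∈ 𝒜, ∀ B ∈ ℬ, (A ∪ B) ∩ Y = B := by
    intro A hA B hB
    rw [union_inter_distrib_right, inter_eq_left.mpr (hℬ B hB).1,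
      disjoint_iff_inter_eq_empty.mp (hXY.mono_left (h𝒜 A hA).1), empty_union]
  have key : ∀ C ∈ (𝒜 ×ˢ ℬ).image (fun p => p.1 ∪ p.2),
      C ∩ X ∈ 𝒜 ∧ C ∩ Y ∈ ℬ ∧ C = (C ∩ X) ∪ (C ∩ Y) := by
    intro C hC
    simp only [mem_image, mem_product] at hC
    obtain ⟨⟨A, B⟩, ⟨hA, hB⟩, rfl⟩ := hC
    rw [projX A hA B hB, projY A hA B hB]
    exact ⟨hA, hB, rfl⟩
  constructor
  · rw [Finset.card_image_of_injOn, Finset.card_product]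
    rintro ⟨A, B⟩ hp ⟨A', B'⟩ hq h
    simp only [mem_coe, mem_product] at hp hq
    have h' : A ∪ B = A' ∪ B' := h
    have h1 : A = A' := by
      rw [← projX A hp.1 B hp.2, ← projX A' hq.1 B' hq.2, h']
    have h2 : B = B' := by
      rw [← projY A hp.1 B hp.2, ← projY A' hq.1 B' hq.2, h']
    exact Prod.ext h1 h2
  · rintro ⟨S, hS, hScard, D, hD, hDsub⟩
    by_cases hall : ∀ C1 ∈ S, ∀ C2 ∈ S, C1 ∩ X = C2 ∩ X
    · apply hℬs
      have hinj : Set.InjOn (· ∩ Y) S := by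
        intro C1 h1 C2 h2 h
        simp only at h
        have e1 := (key C1 (hS h1)).2.2
        have e2 := (key C2 (hS h2)).2.2
        rw [e1, e2, hall C1 h1 C2 h2, h]
      refine ⟨S.image (· ∩ Y), ?_, ?_, D ∩ Y, ?_, ?_⟩
      · intro B hB
        simp only [mem_image] at hB
        obtain ⟨C, hC, rfl⟩ := hB
        exact (key C (hS hC)).2.1
      · rw [card_image_of_injOn hinj, hScard]
      · rintro B1 hB1 B2 hB2 hne
        simp only [mem_image] at hB1 hB2
        obtain ⟨C1, hC1, rfl⟩ := hB1
        obtain ⟨C2, hC2, rfl⟩ := hB2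
        have hCne : C1 ≠ C2 := fun h => hne (by rw [h])
        rw [inter_inter_inter_comm, inter_self, hD C1 hC1 C2 hC2 hCne]
      · rintro B hB
        simp only [mem_image] at hB
        obtain ⟨C, hC, rfl⟩ := hB
        exact inter_subset_inter (hDsub C hC) Subset.rfl
    · push_neg at hall
      obtain ⟨C1, hC1, C2, hC2, hne12⟩ := hall
      apply h𝒜s
      have hinj : Set.InjOn (· ∩ X) S := by
        intro C h1 C' h2 h
        simp only at h
        by_contra hne
        -- then D ⊇ C ∩ X and all X-parts must equal C ∩ X
        have hDX : D ∩ X = C ∩ X := by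
          rw [← hD C h1 C' h2 hne, inter_assoc, ← h, ← inter_assoc, inter_self]
        have hcard : (C ∩ X).card = a := by
          have := (key C (hS h1)).1
          exact (h𝒜 _ this).2
        have hallX : ∀ C3 ∈ S, C3 ∩ X = C ∩ X := by
          intro C3 h3
          have hsub : C ∩ X ⊆ C3 ∩ X := by
            rw [← hDX]
            exact inter_subset_inter (hDsub C3 h3) Subset.rfl
          have hcard3 : (C3 ∩ X).card = a := (h𝒜 _ (key C3 (hS h3)).1).2
          exact (eq_of_subset_of_card_le hsub (by rw [hcard, hcard3])).symm
        exact hne12 (by rw [hallX C1 hC1, hallX C2 hC2])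
      refine ⟨S.image (· ∩ X), ?_, ?_, D ∩ X, ?_, ?_⟩
      · intro A hA
        simp only [mem_image] at hA
        obtain ⟨C, hC, rfl⟩ := hA
        exact (key C (hS hC)).1
      · rw [card_image_of_injOn hinj, hScard]
      · rintro A1 hA1 A2 hA2 hne
        simp only [mem_image] at hA1 hA2
        obtain ⟨C3, hC3, rfl⟩ := hA1
        obtain ⟨C4, hC4, rfl⟩ := hA2
        have hCne : C3 ≠ C4 := fun h => hne (by rw [h])
        rw [inter_inter_inter_comm, inter_self, hD C3 hC3 C4 hC4 hCne]
      · rintro A hA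
        simp only [mem_image] at hA
        obtain ⟨C, hC, rfl⟩ := hA
        exact inter_subset_inter (hDsub C hC) Subset.rfl
end

section
/- Let $k \geq \ell > 0$ be integers, let $A$ be a set of size $k$, and let $F_1, \ldots, F_{k-\ell+2}$ be $k$-element sets forming a $\Delta(k-\ell+2)$-system with kernel $D$ of size $\ell$. If $|A \cap F_i| \geq \ell$ for every $i$, then $|A \cap D| \geq \ell$ (equivalently, since $|D| = \ell$, $D \subseteq A$). -/
open Finset

/-- If `A` has size `k` and `F₁, …, F_{k-ℓ+2}` is a `Δ(k-ℓ+2)`-system of `k`-sets with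
kernel `D` of size `ℓ`, and `|A ∩ Fᵢ| ≥ ℓ` for every `i`, then `|A ∩ D| ≥ ℓ`. -/
theorem delta_system_forces_kernel {α : Type*} [DecidableEq α] (k ℓ : ℕ)
    (hℓ : 0 < ℓ) (hℓk : ℓ ≤ k)
    (A D : Finset α) (hA : A.card = k) (hD : D.card = ℓ)
    (F : Fin (k - ℓ + 2) → Finset α) (hinj : Function.Injective F)
    (hFcard : ∀ i, (F i).card = k)
    (hker : ∀ i j, i ≠ j → F i ∩ F j = D)
    (hint : ∀ i, ℓ ≤ (A ∩ F i).card) :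
    ℓ ≤ (A ∩ D).card := by
  by_contra hcon
  push_neg at hcon
  set m := (A ∩ D).card with hm
  set G : Fin (k - ℓ + 2) → Finset α := fun i => (A ∩ F i) \ D with hG
  have hGdisj : ∀ i ∈ (univ : Finset (Fin (k - ℓ + 2))), ∀ j ∈ univ, i ≠ j →
      Disjoint (G i) (G j) := by
    intro i _ j _ hij
    rw [Finset.disjoint_left]
    intro x hxi hxj
    simp only [hG, mem_sdiff, mem_inter] at hxi hxj
    have hx : x ∈ F i ∩ F j := mem_inter.2 ⟨hxi.1.2, hxj.1.2⟩
    rw [hker i j hij] at hx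
    exact hxi.2 hx
  have hGcard : ∀ i, ℓ - m ≤ (G i).card := by
    intro i
    have h1 : (A ∩ F i ∩ D).card ≤ m := by
      apply card_le_card
      intro x hx
      simp only [mem_inter] at hx ⊢
      exact ⟨hx.1.1, hx.2⟩
    have h2 : ((A ∩ F i) \ D).card + (A ∩ F i ∩ D).card = (A ∩ F i).card :=
      card_sdiff_add_card_inter _ _
    have h3 := hint i
    simp only [hG]
    omega
  have hsum : (k - ℓ + 2) * (ℓ - m) ≤ (univ.biUnion G).card := by
    rw [card_biUnion hGdisj]
    have := Finset.card_nsmul_le_sum univ (fun i => (G i).card) (ℓ - m)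
      (fun i _ => hGcard i)
    simpa [mul_comm] using this
  have hdisj2 : Disjoint (univ.biUnion G) (A ∩ D) := by
    rw [Finset.disjoint_left]
    intro x hx hx2
    simp only [mem_biUnion, hG, mem_sdiff] at hx
    obtain ⟨i, _, _, hxD⟩ := hx
    exact hxD (mem_inter.1 hx2).2
  have hsub : univ.biUnion G ∪ (A ∩ D) ⊆ A := by
    intro x hx
    rcases mem_union.1 hx with h | h
    · simp only [mem_biUnion, hG, mem_sdiff, mem_inter] at h
      obtain ⟨i, _, ⟨hxA, _⟩, _⟩ := h
      exact hxA
    · exact (mem_inter.1 h).1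
  have hkey : (univ.biUnion G).card + m ≤ k := by
    have := card_le_card hsub
    rw [card_union_of_disjoint hdisj2, hA] at this
    exact this
  -- arithmetic contradiction
  have hs : 1 ≤ ℓ - m := by omega
  have hk : (k - ℓ + 2) * (ℓ - m) + m ≤ k := by omega
  set s := ℓ - m with hsdef
  set d := k - ℓ with hddef
  have hkd : k = ℓ + d := by omega
  have hms : m + s = ℓ := by omega
  nlinarith [hk, hs, hms, hkd]
end

section
/- Let $s, k, t$ be positive integers with $t > (s-1)k$. For each $i \in [s]$, let $F_i^1, \ldots, F_i^t$ be $k$-element sets forming a $\Delta(t)$-system with kernel $E_i$. Suppose $E_1, \ldots, E_s$ form a $\Delta(s)$-system with kernel $D$. Then there exist indices $j_1, \ldots, j_s \in [t]$ such that the sets $F_1^{j_1}, \ldots, F_s^{j_s}$ form a $\Delta(s)$-system with kernel $D$. -/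
open Finset

/-- Deza–Erdős–Frankl lemma: given `s` sunflowers `Fᵢ¹, …, Fᵢᵗ` (each a `Δ(t)`-system of
`k`-sets with kernel `Eᵢ`), where `t > (s-1)k` and `E₁, …, E_s` themselves form a
`Δ(s)`-system with kernel `D`, one can pick one petal `Fᵢ^{jᵢ}` from each sunflower so
that the chosen sets form a `Δ(s)`-system with kernel `D`. -/
theorem delta_system_of_delta_systems {α : Type*} [DecidableEq α] (s k t : ℕ)
    (hs : 0 < s) (hk : 0 < k) (ht : (s - 1) * k < t)
    (F : Fin s → Fin t → Finset α) (E : Fin s → Finset α) (D : Finset α)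
    (hFcard : ∀ i j, (F i j).card = k)
    (hFinj : ∀ i, Function.Injective (F i))
    (hFker : ∀ i, ∀ j j', j ≠ j' → F i j ∩ F i j' = E i)
    (hEinj : Function.Injective E)
    (hEker : ∀ i i', i ≠ i' → E i ∩ E i' = D) :
    ∃ j : Fin s → Fin t,
      (∀ i i', i ≠ i' → F i (j i) ≠ F i' (j i')) ∧
      (∀ i i', i ≠ i' → F i (j i) ∩ F i' (j i') = D) := by
  classical
  have ht0 : 0 < t := lt_of_le_of_lt (Nat.zero_le _) ht
  by_cases hs1 : s = 1
  · subst hs1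
    refine ⟨fun _ => ⟨0, ht0⟩, ?_, ?_⟩ <;>
    · intro i i' h
      exact absurd (Subsingleton.elim i i') h
  have hs2 : 2 ≤ s := by omega
  have ht2 : 2 ≤ t := by
    have : 1 * k ≤ (s - 1) * k := Nat.mul_le_mul_right _ (by omega)
    omega
  -- the kernel is contained in every petal
  have hEsub : ∀ i (j : Fin t), E i ⊆ F i j := by
    intro i j
    rcases eq_or_ne j ⟨0, by omega⟩ with h | h
    · rw [← hFker i j ⟨1, by omega⟩ (by rw [h]; simp [Fin.ext_iff])]
      exact inter_subset_left
    · rw [← hFker i j ⟨0, by omega⟩ h]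
      exact inter_subset_left
  have hEcard : ∀ i, (E i).card ≤ k := fun i =>
    (hFcard i ⟨0, ht0⟩) ▸ card_le_card (hEsub i ⟨0, ht0⟩)
  -- petals minus their kernel are disjoint from other petals in the same sunflower
  have hpetal : ∀ (i : Fin s) (c c' : Fin t), c ≠ c' →
      Disjoint (F i c \ E i) (F i c') := by
    intro i c c' hne
    rw [Finset.disjoint_left]
    intro x hx hx'
    rw [Finset.mem_sdiff] at hx
    exact hx.2 ((hFker i c c' hne) ▸ Finset.mem_inter.mpr ⟨hx.1, hx'⟩)
  -- counting: for any set S, at most |S| petals of sunflower i meet S outside E i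
  have hbad : ∀ (i : Fin s) (S : Finset α),
      (univ.filter fun c : Fin t => ¬ Disjoint (F i c \ E i) S).card ≤ S.card := by
    intro i S
    rcases S.eq_empty_or_nonempty with rfl | hS
    · simp
    refine Finset.card_le_card_of_injOn
      (fun c => if h : ¬ Disjoint (F i c \ E i) S then
        (Finset.not_disjoint_iff.mp h).choose else hS.choose) ?_ ?_
    · intro c hc
      rw [Finset.mem_coe, mem_filter] at hc
      simp only []
      rw [dif_pos hc.2]
      exact (Finset.not_disjoint_iff.mp hc.2).choose_spec.2
    · intro c hc c' hc' hfe
      simp only [Finset.coe_filter, Set.mem_setOf_eq] at hc hc'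
      by_contra hne
      simp only [] at hfe
      rw [dif_pos hc.2, dif_pos hc'.2] at hfe
      have h1 := (Finset.not_disjoint_iff.mp hc.2).choose_spec.1
      have h2 := (Finset.not_disjoint_iff.mp hc'.2).choose_spec.1
      rw [hfe] at h1
      exact (Finset.disjoint_left.mp (hpetal i c' c (Ne.symm hne)) h2)
        (Finset.mem_sdiff.mp h1).1
  -- greedy construction
  have key : ∀ n, n ≤ s → ∃ j : Fin s → Fin t, ∀ i : Fin s, i.val < n →
      (∀ i' : Fin s, i'.val < i.val → Disjoint (F i (j i) \ E i) (F i' (j i'))) ∧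
      (∀ i'' : Fin s, i'' ≠ i → Disjoint (F i (j i) \ E i) (E i'')) := by
    intro n
    induction n with
    | zero => exact fun _ => ⟨fun _ => ⟨0, ht0⟩, fun i hi => absurd hi (by omega)⟩
    | succ n ih =>
      intro hn1
      obtain ⟨j, hj⟩ := ih (by omega)
      set iN : Fin s := ⟨n, by omega⟩
      have hgood : ∃ c : Fin t,
          (∀ i' : Fin s, i'.val < n → Disjoint (F iN c \ E iN) (F i' (j i'))) ∧
          (∀ i'' : Fin s, i'' ≠ iN → Disjoint (F iN c \ E iN) (E i'')) := by
        by_contra hcon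
        push_neg at hcon
        have hC : ∀ c : Fin t, ∃ i'' : Fin s, i'' ≠ iN ∧ ¬ Disjoint (F iN c \ E iN)
            (if i''.val < n then F i'' (j i'') else E i'') := by
          intro c
          by_contra hall
          push_neg at hall
          have hA : ∀ i' : Fin s, i'.val < n → Disjoint (F iN c \ E iN) (F i' (j i')) := by
            intro i' hi'
            have hne : i' ≠ iN := Fin.ne_of_val_ne (by simp [iN]; omega)
            have := hall i' hne
            rwa [if_pos hi'] at this
          obtain ⟨i'', hne, hd⟩ := hcon c hA
          by_cases hlt : i''.val < n
          · have := hall i'' hne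
            rw [if_pos hlt] at this
            exact hd (Finset.disjoint_of_subset_right (hEsub i'' (j i'')) this)
          · have := hall i'' hne
            rw [if_neg hlt] at this
            exact hd this
        -- every c is bad, so t ≤ (s-1)*k
        have hsub : (univ : Finset (Fin t)) ⊆ (univ.erase iN).biUnion
            (fun i'' => univ.filter fun c => ¬ Disjoint (F iN c \ E iN)
              (if i''.val < n then F i'' (j i'') else E i'')) := by
          intro c _
          obtain ⟨i'', hne, hd⟩ := hC c
          rw [Finset.mem_biUnion]
          exact ⟨i'', Finset.mem_erase.mpr ⟨hne, mem_univ _⟩,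
            Finset.mem_filter.mpr ⟨mem_univ _, hd⟩⟩
        have hle : t ≤ (s - 1) * k := by
          calc t = (univ : Finset (Fin t)).card := by simp
            _ ≤ _ := card_le_card hsub
            _ ≤ ∑ i'' ∈ univ.erase iN, (univ.filter fun c : Fin t =>
                  ¬ Disjoint (F iN c \ E iN)
                  (if i''.val < n then F i'' (j i'') else E i'')).card :=
                Finset.card_biUnion_le
            _ ≤ ∑ i'' ∈ univ.erase iN, k := by
                refine Finset.sum_le_sum fun i'' _ => ?_
                refine le_trans (hbad iN _) ?_
                split
                · exact le_of_eq (hFcard _ _)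
                · exact hEcard _
            _ = (s - 1) * k := by
                rw [Finset.sum_const, smul_eq_mul]
                congr 1
                rw [Finset.card_erase_of_mem (mem_univ _), card_univ, Fintype.card_fin]
        omega
      obtain ⟨c, hc1, hc2⟩ := hgood
      refine ⟨Function.update j iN c, ?_⟩
      intro i hi
      by_cases hieq : i = iN
      · subst hieq
        rw [Function.update_self]
        refine ⟨fun i' hi' => ?_, hc2⟩
        have hne : i' ≠ iN := Fin.ne_of_val_ne (by simp [iN]; omega)
        rw [Function.update_of_ne hne]
        exact hc1 i' (by simpa [iN] using hi')
      · have hin : i.val < n := by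
          have : i.val ≠ n := fun h => hieq (Fin.ext h)
          omega
        rw [Function.update_of_ne hieq]
        obtain ⟨H1, H2⟩ := hj i hin
        refine ⟨fun i' hi' => ?_, H2⟩
        have hne : i' ≠ iN := Fin.ne_of_val_ne (by simp [iN]; omega)
        rw [Function.update_of_ne hne]
        exact H1 i' hi'
  obtain ⟨j, hj⟩ := key s le_rfl
  have hD : ∀ i i' : Fin s, i.val < i'.val → F i (j i) ∩ F i' (j i') = D := by
    intro i i' hlt
    obtain ⟨H1, H2⟩ := hj i' i'.isLt
    obtain ⟨G1, G2⟩ := hj i i.isLt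
    apply subset_antisymm
    · intro x hx
      rw [mem_inter] at hx
      have hxi' : x ∈ E i' := by
        by_contra hxe
        exact (Finset.disjoint_left.mp (H1 i hlt)) (mem_sdiff.mpr ⟨hx.2, hxe⟩) hx.1
      have hxi : x ∈ E i := by
        by_contra hxe
        exact (Finset.disjoint_left.mp (G2 i' (Fin.ne_of_val_ne (by omega))))
          (mem_sdiff.mpr ⟨hx.1, hxe⟩) hxi'
      rw [← hEker i i' (Fin.ne_of_val_ne (by omega))]
      exact mem_inter.mpr ⟨hxi, hxi'⟩
    · intro x hx
      rw [← hEker i i' (Fin.ne_of_val_ne (by omega))] at hx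
      rw [mem_inter] at hx ⊢
      exact ⟨hEsub i _ hx.1, hEsub i' _ hx.2⟩
  have hint : ∀ i i' : Fin s, i ≠ i' → F i (j i) ∩ F i' (j i') = D := by
    intro i i' hne
    rcases Nat.lt_or_ge i.val i'.val with h | h
    · exact hD i i' h
    · have h' : i'.val < i.val := by
        rcases Nat.lt_or_ge i'.val i.val with h2 | h2
        · exact h2
        · exact absurd (Fin.ext (by omega)) hne
      rw [inter_comm]
      exact hD i' i h'
  refine ⟨j, ?_, hint⟩
  intro i i' hne heq
  have h1 : F i (j i) = D := by rw [← hint i i' hne, heq, inter_self]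
  have hEi : E i = D := subset_antisymm (h1 ▸ hEsub i (j i))
    (by rw [← hEker i i' hne]; exact inter_subset_left)
  have h2 : F i' (j i') = D := by rw [← heq]; exact h1
  have hEi' : E i' = D := subset_antisymm (h2 ▸ hEsub i' (j i'))
    (by rw [← hEker i i' hne]; exact inter_subset_right)
  exact hne (hEinj (hEi.trans hEi'.symm))
end

section
/- Let $A_1, \ldots, A_m$ be (not necessarily distinct) subsets of $[n]$ such that for every $t \geq 1$ and every choice of distinct indices $i_1, \ldots, i_t$, the intersection $A_{i_1} \cap \cdots \cap A_{i_t}$ does not have size exactly $t - 1$. Then $m \leq n$. -/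
open Finset

section aux

variable {n m : ℕ}

lemma mem_inf_iff (T : Finset (Fin m)) (A : Fin m → Finset (Fin n)) (y : Fin n) :
    y ∈ T.inf A ↔ ∀ j ∈ T, y ∈ A j := by
  induction T using Finset.induction_on with
  | empty => simp [Finset.inf_empty]
  | insert _ _ h ih => simp [Finset.inf_insert, Finset.mem_inter, ih, or_imp, forall_and]

/-- Main auxiliary lemma, by strong induction on the ground set `V`. -/
lemma frankl_katona_aux (V : Finset (Fin n)) :
    ∀ (I : Finset (Fin m)) (A : Fin m → Finset (Fin n)),
      (∀ i ∈ I, A i ⊆ V) →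
      (∀ T ⊆ I, T.Nonempty → (T.inf A).card ≠ T.card - 1) →
      I.card ≤ V.card := by
  induction V using Finset.strongInduction with
  | _ V ih =>
    intro I A hsub hcond
    -- degree of an element
    set deg : Fin n → ℕ := fun x => (I.filter fun j => x ∈ A j).card with hdeg
    -- Key claim: deg x ≤ (A i).card for x ∈ A i, i ∈ I
    have key : ∀ i ∈ I, ∀ x ∈ A i, deg x ≤ (A i).card := by
      intro i hi x hx
      set I' : Finset (Fin m) := (I.erase i).filter (fun j => x ∈ A j) with hI'
      set A' : Fin m → Finset (Fin n) := fun j => ((A j) ∩ (A i)).erase x with hA'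
      set V' : Finset (Fin n) := (A i).erase x with hV'
      have hV'ss : V' ⊂ V := by
        constructor
        · exact (Finset.erase_subset _ _).trans (hsub i hi)
        · intro hVV'
          exact (Finset.notMem_erase x (A i)) (hVV' (hsub i hi hx))
      have hsub' : ∀ j ∈ I', A' j ⊆ V' :=
        fun j _ => Finset.erase_subset_erase x (Finset.inter_subset_right)
      have hcond' : ∀ T ⊆ I', T.Nonempty → (T.inf A').card ≠ T.card - 1 := by
        intro T hTI' hT
        have hiT : i ∉ T := by
          intro hiT
          exact (Finset.notMem_erase i I) (Finset.mem_of_mem_filter i (hTI' hiT))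
        have hTI : insert i T ⊆ I := by
          intro j hj
          rcases Finset.mem_insert.mp hj with rfl | hj
          · exact hi
          · exact Finset.mem_of_mem_erase (Finset.mem_of_mem_filter j (hTI' hj))
        have hxmem : ∀ j ∈ T, x ∈ A j := by
          intro j hj
          exact (Finset.mem_filter.mp (hTI' hj)).2
        -- T.inf A' = ((insert i T).inf A).erase x
        have hinf : T.inf A' = ((insert i T).inf A).erase x := by
          ext y
          rw [mem_inf_iff, Finset.mem_erase, mem_inf_iff]
          constructor
          · intro hall
            obtain ⟨j0, hj0⟩ := hT
            have h0 := hall j0 hj0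
            rw [hA'] at h0
            simp only [Finset.mem_erase, Finset.mem_inter] at h0
            refine ⟨h0.1, ?_⟩
            intro j hj
            rcases Finset.mem_insert.mp hj with rfl | hj
            · exact h0.2.2
            · have := hall j hj
              simp only [hA', Finset.mem_erase, Finset.mem_inter] at this
              exact this.2.1
          · rintro ⟨hyx, hall⟩ j hj
            simp only [hA', Finset.mem_erase, Finset.mem_inter]
            exact ⟨hyx, hall j (Finset.mem_insert_of_mem hj),
              hall i (Finset.mem_insert_self i T)⟩
        have hxW : x ∈ (insert i T).inf A := by
          rw [mem_inf_iff]
          intro j hj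
          rcases Finset.mem_insert.mp hj with rfl | hj
          · exact hx
          · exact hxmem j hj
        have hWpos : 1 ≤ ((insert i T).inf A).card := Finset.card_pos.mpr ⟨x, hxW⟩
        have hWcond := hcond (insert i T) hTI ⟨i, Finset.mem_insert_self i T⟩
        rw [Finset.card_insert_of_notMem hiT] at hWcond
        have hTpos : 1 ≤ T.card := Finset.card_pos.mpr hT
        rw [hinf, Finset.card_erase_of_mem hxW]
        omega
      have hIH := ih V' hV'ss I' A' hsub' hcond'
      have hfilter : I.filter (fun j => x ∈ A j) = insert i I' := by
        rw [hI', Finset.filter_erase]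
        rw [Finset.insert_erase]
        exact Finset.mem_filter.mpr ⟨hi, hx⟩
      have hiI' : i ∉ I' := fun h => (Finset.notMem_erase i I) (Finset.mem_of_mem_filter i h)
      have hdegx : deg x = I'.card + 1 := by
        rw [hdeg]
        simp only
        rw [hfilter, Finset.card_insert_of_notMem hiI']
      have hV'card : V'.card = (A i).card - 1 := Finset.card_erase_of_mem hx
      have hApos : 1 ≤ (A i).card := by
        exact Finset.card_pos.mpr ⟨x, hx⟩
      omega
    -- Now the weighted double count, in ℚ
    have hdegpos : ∀ i ∈ I, ∀ x ∈ A i, 1 ≤ deg x := by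
      intro i hi x hx
      exact Finset.card_pos.mpr ⟨i, Finset.mem_filter.mpr ⟨hi, hx⟩⟩
    have claim1 : ∀ i ∈ I, (1 : ℚ) ≤ ∑ x ∈ A i, ((deg x : ℚ))⁻¹ := by
      intro i hi
      have hApos : 0 < (A i).card := by
        have h0 := hcond {i} (Finset.singleton_subset_iff.mpr hi) ⟨i, Finset.mem_singleton_self i⟩
        simp only [Finset.inf_singleton, Finset.card_singleton] at h0
        omega
      have hstep : ∀ x ∈ A i, (((A i).card : ℚ))⁻¹ ≤ ((deg x : ℚ))⁻¹ := by
        intro x hx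
        apply inv_anti₀
        · exact_mod_cast hdegpos i hi x hx
        · exact_mod_cast key i hi x hx
      calc (1 : ℚ) = (A i).card • (((A i).card : ℚ))⁻¹ := by
            rw [nsmul_eq_mul]
            rw [mul_inv_cancel₀]
            positivity
        _ = ∑ _x ∈ A i, (((A i).card : ℚ))⁻¹ := by rw [Finset.sum_const]
        _ ≤ ∑ x ∈ A i, ((deg x : ℚ))⁻¹ := Finset.sum_le_sum hstep
    -- double counting
    have hswap : ∑ i ∈ I, ∑ x ∈ A i, ((deg x : ℚ))⁻¹
        = ∑ x ∈ V, (deg x : ℚ) * ((deg x : ℚ))⁻¹ := by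
      have h1 : ∀ i ∈ I, ∑ x ∈ A i, ((deg x : ℚ))⁻¹
          = ∑ x ∈ V, if x ∈ A i then ((deg x : ℚ))⁻¹ else 0 := by
        intro i hi
        rw [Finset.sum_ite_mem]
        congr 1
        exact (Finset.inter_eq_right.mpr (hsub i hi)).symm
      rw [Finset.sum_congr rfl h1, Finset.sum_comm]
      apply Finset.sum_congr rfl
      intro x _
      rw [← Finset.sum_filter, Finset.sum_const, hdeg]
      simp [nsmul_eq_mul]
    have hbound : ∑ x ∈ V, (deg x : ℚ) * ((deg x : ℚ))⁻¹ ≤ (V.card : ℚ) := by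
      calc ∑ x ∈ V, (deg x : ℚ) * ((deg x : ℚ))⁻¹ ≤ ∑ _x ∈ V, (1 : ℚ) := by
            apply Finset.sum_le_sum
            intro x _
            rcases Nat.eq_zero_or_pos (deg x) with h | h
            · simp [h]
            · rw [mul_inv_cancel₀]
              have : (0:ℚ) < (deg x : ℚ) := by exact_mod_cast h
              positivity
        _ = (V.card : ℚ) := by rw [Finset.sum_const, nsmul_eq_mul, mul_one]
    have : (I.card : ℚ) ≤ (V.card : ℚ) := by
      calc (I.card : ℚ) = ∑ _i ∈ I, (1:ℚ) := by rw [Finset.sum_const, nsmul_eq_mul, mul_one]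
        _ ≤ ∑ i ∈ I, ∑ x ∈ A i, ((deg x : ℚ))⁻¹ := Finset.sum_le_sum claim1
        _ = ∑ x ∈ V, (deg x : ℚ) * ((deg x : ℚ))⁻¹ := hswap
        _ ≤ (V.card : ℚ) := hbound
    exact_mod_cast this

end aux

/-- Frankl–Katona theorem: if `A₁, …, A_m` are subsets of `[n]` such that for every
nonempty collection of `t` distinct indices the corresponding intersection does not have
size exactly `t - 1`, then `m ≤ n`. -/
theorem frankl_katona (n m : ℕ) (A : Fin m → Finset (Fin n))
    (h : ∀ T : Finset (Fin m), T.Nonempty → (T.inf A).card ≠ T.card - 1) :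
    m ≤ n := by
  have := frankl_katona_aux (Finset.univ : Finset (Fin n)) (Finset.univ : Finset (Fin m)) A
    (fun i _ => Finset.subset_univ _) (fun T _ hT => h T hT)
  simpa using this
end

section
/- For every family $\mathcal{F}$ of $k$-element subsets of $[n]$, there exists a partition of $[n]$ into $k$ parts $X_1, \ldots, X_k$ and a subfamily $\mathcal{F}' \subseteq \mathcal{F}$ with $|\mathcal{F}'| \geq \frac{k!}{k^k}|\mathcal{F}|$ such that every $A \in \mathcal{F}'$ satisfies $|A \cap X_i| = 1$ for all $i \in [k]$. -/
open Finset

lemma ek_card_filter_one_iff {α : Type*} [DecidableEq α] {s : Finset α} {p : α → Prop}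
    [DecidablePred p] : (s.filter p).card = 1 ↔ ∃! a, a ∈ s ∧ p a := by
  rw [Finset.card_eq_one]
  constructor
  · rintro ⟨a, ha⟩
    obtain ⟨h1, h2⟩ := Finset.eq_singleton_iff_unique_mem.mp ha
    exact ⟨a, Finset.mem_filter.mp h1, fun b hb => h2 b (Finset.mem_filter.mpr hb)⟩
  · rintro ⟨a, ha, hu⟩
    exact ⟨a, Finset.eq_singleton_iff_unique_mem.mpr
      ⟨Finset.mem_filter.mpr ha, fun b hb => hu b (Finset.mem_filter.mp hb)⟩⟩

lemma ek_iff {n k : ℕ} (A : Finset (Fin n)) (c : Fin n → Fin k) :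
    (∀ i, (A.filter (fun v => c v = i)).card = 1) ↔
      Function.Bijective (fun x : ↥A => c x) := by
  rw [Function.bijective_iff_existsUnique]
  constructor
  · intro h i
    obtain ⟨a, ⟨haA, hca⟩, hu⟩ := ek_card_filter_one_iff.mp (h i)
    exact ⟨⟨a, haA⟩, hca, fun y hy => Subtype.ext (hu y ⟨y.2, hy⟩)⟩
  · intro h i
    obtain ⟨x, hx, hu⟩ := h i
    exact ek_card_filter_one_iff.mpr
      ⟨x, ⟨x.2, hx⟩, fun b hb => congrArg Subtype.val (hu ⟨b, hb.1⟩ hb.2)⟩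

lemma ek_count {n k : ℕ} (A : Finset (Fin n)) (hA : A.card = k) :
    (Finset.univ.filter (fun c : Fin n → Fin k =>
        ∀ i, (A.filter (fun v => c v = i)).card = 1)).card =
      Nat.factorial k * k ^ (n - k) := by
  classical
  rw [← Fintype.card_subtype]
  have e1 : {c : Fin n → Fin k // ∀ i, (A.filter (fun v => c v = i)).card = 1} ≃
      {f : ↥A → Fin k // Function.Bijective f} × (↥(Aᶜ) → Fin k) :=
    { toFun := fun ⟨c, hc⟩ => (⟨fun x => c x, (ek_iff A c).mp hc⟩, fun x => c x)
      invFun := fun ⟨⟨f, hf⟩, g⟩ =>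
        ⟨fun v => if h : v ∈ A then f ⟨v, h⟩ else g ⟨v, Finset.mem_compl.mpr h⟩, by
          refine (ek_iff A _).mpr ?_
          have : (fun x : ↥A => if h : (x : Fin n) ∈ A then f ⟨x, h⟩
              else g ⟨x, Finset.mem_compl.mpr h⟩) = f := by
            funext x; simp [x.2]
          rw [this]; exact hf⟩
      left_inv := fun ⟨c, hc⟩ => by
        ext v
        by_cases h : v ∈ A <;> simp [h]
      right_inv := fun ⟨⟨f, hf⟩, g⟩ => by
        refine Prod.ext ?_ ?_
        · ext x; simp [x.2]
        · ext x
          have hx := Finset.mem_compl.mp x.2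
          simp [hx] }
  rw [Fintype.card_congr e1, Fintype.card_prod, Fintype.card_fun]
  have e2 : {f : ↥A → Fin k // Function.Bijective f} ≃ (↥A ↪ Fin k) :=
    (Equiv.subtypeEquivRight (fun f => by
      rw [Fintype.bijective_iff_injective_and_card]
      simp [Fintype.card_coe, hA])).trans (Equiv.subtypeInjectiveEquivEmbedding _ _)
  rw [Fintype.card_congr e2, Fintype.card_embedding_eq]
  simp [Fintype.card_coe, hA, Finset.card_compl, Nat.descFactorial_self]

/-- Erdős–Kleitman lemma: every family `𝒻` of `k`-element subsets of `[n]` admits a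
partition `[n] = X₁ ⊔ ⋯ ⊔ X_k` and a subfamily `𝒻' ⊆ 𝒻` with
`|𝒻'| ≥ (k!/kᵏ)·|𝒻|` all of whose members meet each part in exactly one element. -/
theorem erdos_kleitman (n k : ℕ) (hk : 0 < k)
    (𝒻 : Finset (Finset (Fin n))) (hcard : ∀ A ∈ 𝒻, A.card = k) :
    ∃ X : Fin k → Finset (Fin n), (∀ v : Fin n, ∃! i, v ∈ X i) ∧
      ∃ 𝒻' ⊆ 𝒻, Nat.factorial k * 𝒻.card ≤ k ^ k * 𝒻'.card ∧
        ∀ A ∈ 𝒻', ∀ i, (A ∩ X i).card = 1 := by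
  classical
  have hkinh : Nonempty (Fin k) := ⟨⟨0, hk⟩⟩
  rcases Finset.eq_empty_or_nonempty 𝒻 with hF | hF
  · refine ⟨fun i => if i = ⟨0, hk⟩ then Finset.univ else ∅, ?_, ∅, by simp, by simp [hF], by simp⟩
    intro v
    refine ⟨⟨0, hk⟩, by simp, fun i hi => ?_⟩
    by_contra h
    simp [h] at hi
  · -- k ≤ n
    obtain ⟨A₀, hA₀⟩ := hF
    have hkn : k ≤ n := by
      rw [← hcard A₀ hA₀]
      simpa using Finset.card_le_card (Finset.subset_univ A₀)
    set Q : (Fin n → Fin k) → Finset (Finset (Fin n)) :=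
      fun c => 𝒻.filter (fun A => ∀ i, (A.filter (fun v => c v = i)).card = 1) with hQ
    have hsum : ∑ c : Fin n → Fin k, (Q c).card
        = 𝒻.card * (Nat.factorial k * k ^ (n - k)) := by
      have : ∀ c, (Q c).card = ∑ A ∈ 𝒻,
          (if ∀ i, (A.filter (fun v => c v = i)).card = 1 then 1 else 0) := by
        intro c; rw [hQ]; rw [Finset.card_filter]
      simp_rw [this]
      rw [Finset.sum_comm]
      have : ∀ A ∈ 𝒻, (∑ c : Fin n → Fin k,
          if ∀ i, (A.filter (fun v => c v = i)).card = 1 then 1 else 0)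
            = Nat.factorial k * k ^ (n - k) := by
        intro A hA
        rw [← Finset.card_filter]
        exact ek_count A (hcard A hA)
      rw [Finset.sum_congr rfl this, Finset.sum_const, smul_eq_mul]
    -- averaging
    have hne : (Finset.univ : Finset (Fin n → Fin k)).Nonempty := Finset.univ_nonempty
    have hcardU : (Finset.univ : Finset (Fin n → Fin k)).card = k ^ n := by
      simp [Fintype.card_fun]
    have havg : ∑ c : Fin n → Fin k, (Nat.factorial k * 𝒻.card)
        ≤ ∑ c : Fin n → Fin k, k ^ k * (Q c).card := by
      rw [Finset.sum_const, ← Finset.mul_sum, hsum, hcardU, smul_eq_mul]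
      have hpow : k ^ n = k ^ k * k ^ (n - k) := by
        rw [← pow_add, Nat.add_sub_cancel' hkn]
      rw [hpow]
      exact le_of_eq (by ring)
    obtain ⟨c, _, hc⟩ := Finset.exists_le_of_sum_le hne havg
    refine ⟨fun i => Finset.univ.filter (fun v => c v = i), ?_, Q c,
      Finset.filter_subset _ _, hc, ?_⟩
    · intro v
      exact ⟨c v, by simp, fun i hi => ((Finset.mem_filter.mp hi).2).symm⟩
    · intro A hA i
      have h := (Finset.mem_filter.mp hA).2 i
      have : A ∩ Finset.univ.filter (fun v => c v = i)
          = A.filter (fun v => c v = i) := by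
        ext v; simp [Finset.mem_filter, and_assoc]
      rw [this]; exact h
end

section
/- Let $n \geq k \geq t \geq 1$ and suppose $\mathcal{F} \subseteq \binom{[n]}{k}$ is $t$-intersecting, and that there exist $A, B, C \in \mathcal{F}$ with $|A \cap B \cap C| < t$. Then $|\mathcal{F}| \leq \binom{3k}{t+1} \binom{n-t-1}{k-t-1}$. -/
open Finset

/-- If a `t`-intersecting family `𝒻 ⊆ C([n],k)` contains three sets `A, B, C` with
`|A ∩ B ∩ C| < t`, then `|𝒻| ≤ C(3k, t+1) · C(n-t-1, k-t-1)`. -/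
theorem nontrivial_t_intersecting_bound (n k t : ℕ) (ht : 1 ≤ t) (htk : t ≤ k) (hkn : k ≤ n)
    (𝒻 : Finset (Finset (Fin n))) (hcard : ∀ F ∈ 𝒻, F.card = k)
    (hint : ∀ F₁ ∈ 𝒻, ∀ F₂ ∈ 𝒻, t ≤ (F₁ ∩ F₂).card)
    (A B C : Finset (Fin n)) (hA : A ∈ 𝒻) (hB : B ∈ 𝒻) (hC : C ∈ 𝒻)
    (habc : (A ∩ B ∩ C).card < t) :
    𝒻.card ≤ (3 * k).choose (t + 1) * (n - t - 1).choose (k - t - 1) := by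
  set U := A ∪ B ∪ C with hU
  -- every F in the family meets U in at least t+1 elements
  have hbig : ∀ F ∈ 𝒻, t + 1 ≤ (F ∩ U).card := by
    intro F hF
    by_contra hlt
    push_neg at hlt
    have hle : (F ∩ U).card ≤ t := Nat.lt_succ_iff.mp hlt
    have key : ∀ X, X ∈ 𝒻 → X ⊆ U → F ∩ U ⊆ X := by
      intro X hX hXU
      have h1 : F ∩ X ⊆ F ∩ U := inter_subset_inter le_rfl hXU
      have h2 : t ≤ (F ∩ X).card := hint F hF X hX
      have h3 : (F ∩ U).card ≤ (F ∩ X).card := le_trans hle h2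
      have := eq_of_subset_of_card_le h1 h3
      rw [← this]
      exact inter_subset_right
    have hsub : F ∩ U ⊆ A ∩ B ∩ C := by
      refine subset_inter (subset_inter ?_ ?_) ?_
      · exact key A hA (subset_union_left.trans subset_union_left)
      · exact key B hB (subset_union_right.trans subset_union_left)
      · exact key C hC subset_union_right
    have : t ≤ (A ∩ B ∩ C).card :=
      le_trans (le_trans (hint F hF A hA)
        (card_le_card (inter_subset_inter le_rfl
          (subset_union_left.trans subset_union_left))))
        (card_le_card hsub)
    omega
  -- cover 𝒻 by (t+1)-subsets of U
  have hcover : 𝒻 ⊆ (U.powersetCard (t + 1)).biUnion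
      (fun S => 𝒻.filter (fun F => S ⊆ F)) := by
    intro F hF
    obtain ⟨S, hS1, hS2⟩ := exists_subset_card_eq (hbig F hF)
    refine mem_biUnion.mpr ⟨S, ?_, ?_⟩
    · exact mem_powersetCard.mpr ⟨hS1.trans inter_subset_right, hS2⟩
    · exact mem_filter.mpr ⟨hF, hS1.trans inter_subset_left⟩
  have hUcard : U.card ≤ 3 * k := by
    calc U.card ≤ A.card + B.card + C.card := by
          refine le_trans (card_union_le _ _) ?_
          exact Nat.add_le_add_right (card_union_le _ _) _
      _ = 3 * k := by rw [hcard A hA, hcard B hB, hcard C hC]; ring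
  -- each fiber is small
  have hfiber : ∀ S ∈ U.powersetCard (t + 1),
      (𝒻.filter (fun F => S ⊆ F)).card ≤ (n - t - 1).choose (k - t - 1) := by
    intro S hS
    obtain ⟨hSU, hScard⟩ := mem_powersetCard.mp hS
    have hinj : ((𝒻.filter (fun F => S ⊆ F)).image (fun F => F \ S)).card
        = (𝒻.filter (fun F => S ⊆ F)).card := by
      apply card_image_of_injOn
      intro X hX Y hY hXY
      have hX' := mem_filter.mp hX
      have hY' := mem_filter.mp hY
      have hXY' : X \ S = Y \ S := hXY
      have : X \ S ∪ S = Y \ S ∪ S := by rw [hXY']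
      rwa [sdiff_union_of_subset hX'.2, sdiff_union_of_subset hY'.2] at this
    rw [← hinj]
    have hsub : (𝒻.filter (fun F => S ⊆ F)).image (fun F => F \ S)
        ⊆ Sᶜ.powersetCard (k - t - 1) := by
      intro X hX
      obtain ⟨F, hF, rfl⟩ := mem_image.mp hX
      have hF' := mem_filter.mp hF
      refine mem_powersetCard.mpr ⟨?_, ?_⟩
      · intro x hx
        simp only [mem_sdiff] at hx
        simp [hx.2]
      · rw [card_sdiff_of_subset hF'.2, hcard F hF'.1, hScard]
        omega
    refine le_trans (card_le_card hsub) ?_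
    rw [card_powersetCard, card_compl, hScard, Fintype.card_fin]
    have : n - (t + 1) = n - t - 1 := by omega
    rw [this]
  calc 𝒻.card ≤ ((U.powersetCard (t + 1)).biUnion
        (fun S => 𝒻.filter (fun F => S ⊆ F))).card := card_le_card hcover
    _ ≤ ∑ S ∈ U.powersetCard (t + 1), (𝒻.filter (fun F => S ⊆ F)).card :=
        card_biUnion_le
    _ ≤ ∑ _S ∈ U.powersetCard (t + 1), (n - t - 1).choose (k - t - 1) :=
        Finset.sum_le_sum hfiber
    _ = (U.powersetCard (t + 1)).card * (n - t - 1).choose (k - t - 1) := by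
        rw [sum_const, smul_eq_mul]
    _ ≤ (3 * k).choose (t + 1) * (n - t - 1).choose (k - t - 1) := by
        apply Nat.mul_le_mul_right
        rw [card_powersetCard]
        exact Nat.choose_le_choose _ hUcard
end

section
/- Fix a positive integer $q$ and a positive integer $m$. Every family $\mathcal{F} \subseteq 2^{[n]}$ has a subfamily $\mathcal{G} \subseteq \mathcal{F}$ with $|\mathcal{G}| \geq |\mathcal{F}| - m\binom{n}{q}$ such that every $q$-element set $Q$ that is contained in some member of $\mathcal{G}$ is contained in at least $m$ members of $\mathcal{G}$. -/
open Finset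

lemma min_degree_cleaning_aux (n q m : ℕ) :
    ∀ k (𝒻 : Finset (Finset (Fin n))),
      ((Finset.univ.powersetCard q).filter (fun Q => ∃ X ∈ 𝒻, Q ⊆ X)).card ≤ k →
      ∃ 𝒢 ⊆ 𝒻, 𝒻.card ≤ 𝒢.card + m * k ∧
        ∀ Q : Finset (Fin n), Q.card = q → (∃ X ∈ 𝒢, Q ⊆ X) →
          m ≤ (𝒢.filter fun X => Q ⊆ X).card := by
  intro k
  induction k with
  | zero =>
    intro 𝒻 h
    refine ⟨𝒻, Finset.Subset.refl _, by simp, ?_⟩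
    intro Q hQ hcov
    exfalso
    have hQmem : Q ∈ (Finset.univ.powersetCard q).filter (fun Q => ∃ X ∈ 𝒻, Q ⊆ X) := by
      simp only [Finset.mem_filter, Finset.mem_powersetCard]
      exact ⟨⟨Finset.subset_univ _, hQ⟩, hcov⟩
    have := Finset.card_pos.mpr ⟨Q, hQmem⟩
    omega
  | succ k ih =>
    intro 𝒻 h
    by_cases hcl : ∀ Q : Finset (Fin n), Q.card = q → (∃ X ∈ 𝒻, Q ⊆ X) →
        m ≤ (𝒻.filter fun X => Q ⊆ X).card
    · exact ⟨𝒻, Finset.Subset.refl _, Nat.le_add_right _ _, hcl⟩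
    · push_neg at hcl
      obtain ⟨Q, hQcard, hQcov, hQdeg⟩ := hcl
      set 𝒻' := 𝒻.filter (fun X => ¬ Q ⊆ X) with h𝒻'
      have hQmem : Q ∈ (Finset.univ.powersetCard q).filter (fun Q => ∃ X ∈ 𝒻, Q ⊆ X) := by
        simp only [Finset.mem_filter, Finset.mem_powersetCard]
        exact ⟨⟨Finset.subset_univ _, hQcard⟩, hQcov⟩
      have hsub : ((Finset.univ.powersetCard q).filter (fun Q' => ∃ X ∈ 𝒻', Q' ⊆ X)) ⊆
          ((Finset.univ.powersetCard q).filter (fun Q' => ∃ X ∈ 𝒻, Q' ⊆ X)).erase Q := by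
        intro Q' hQ'
        simp only [Finset.mem_filter, h𝒻'] at hQ'
        obtain ⟨hQ'p, X, hX, hQ'X⟩ := hQ'
        refine Finset.mem_erase.mpr ⟨?_, Finset.mem_filter.mpr ⟨hQ'p, X, hX.1, hQ'X⟩⟩
        rintro rfl
        exact hX.2 hQ'X
      have hcard' : ((Finset.univ.powersetCard q).filter (fun Q' => ∃ X ∈ 𝒻', Q' ⊆ X)).card ≤ k := by
        have := Finset.card_le_card hsub
        rw [Finset.card_erase_of_mem hQmem] at this
        omega
      obtain ⟨𝒢, h1, h2, h3⟩ := ih 𝒻' hcard'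
      refine ⟨𝒢, h1.trans (Finset.filter_subset _ _), ?_, h3⟩
      have hsplit : (𝒻.filter (fun X => Q ⊆ X)).card + 𝒻'.card = 𝒻.card := by
        rw [h𝒻']
        exact Finset.card_filter_add_card_filter_not (fun X => Q ⊆ X)
      have hmk : m * (k + 1) = m * k + m := by ring
      omega

/-- Frankl's cleaning proposition: every family `𝒻 ⊆ 2^[n]` has a subfamily `𝒢` with
`|𝒢| ≥ |𝒻| - m·C(n,q)` such that every `q`-element set contained in some member of `𝒢`
is contained in at least `m` members of `𝒢`. -/
theorem min_degree_cleaning (n q m : ℕ) (hq : 0 < q) (hm : 0 < m)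
    (𝒻 : Finset (Finset (Fin n))) :
    ∃ 𝒢 ⊆ 𝒻, 𝒻.card ≤ 𝒢.card + m * n.choose q ∧
      ∀ Q : Finset (Fin n), Q.card = q → (∃ X ∈ 𝒢, Q ⊆ X) →
        m ≤ (𝒢.filter fun X => Q ⊆ X).card := by
  apply min_degree_cleaning_aux n q m (n.choose q) 𝒻
  calc ((Finset.univ.powersetCard q).filter (fun Q => ∃ X ∈ 𝒻, Q ⊆ X)).card
      ≤ (Finset.univ.powersetCard q : Finset (Finset (Fin n))).card :=
        Finset.card_le_card (Finset.filter_subset _ _)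
    _ = n.choose q := by rw [Finset.card_powersetCard, Finset.card_univ, Fintype.card_fin]
end

section
/- Let $\mathcal{M} \subseteq 2^{[k]}$ be closed under pairwise intersection, and suppose every member of $\mathcal{M}$ and every pairwise intersection of members has cardinality divisible by $d$, where $d$ divides $k$. Define the atoms of $\mathcal{M}$ as the equivalence classes of the relation on $[k]$ where $x \sim y$ iff for every $M \in \mathcal{M}$, $x \in M \Leftrightarrow y \in M$. Then every atom $P$ has cardinality divisible by $d$. -/
open Finset

variable {α : Type*} [DecidableEq α]

/-- The intersection of a nonempty subfamily of an intersection-closed family is a member. -/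
lemma inf_mem_of_closed [Fintype α] (ℳ : Finset (Finset α))
    (hclosed : ∀ M₁ ∈ ℳ, ∀ M₂ ∈ ℳ, M₁ ∩ M₂ ∈ ℳ) :
    ∀ 𝒩 : Finset (Finset α), 𝒩.Nonempty → 𝒩 ⊆ ℳ → 𝒩.inf id ∈ ℳ := by
  intro 𝒩 hne hsub
  induction hne using Finset.Nonempty.cons_induction with
  | singleton a => simpa using hsub (by simp)
  | cons a s ha hs ih =>
    rw [Finset.inf_cons]
    exact hclosed a (hsub (by simp)) _ (ih fun x hx => hsub (by simp [hx]))

/-- The union of any subfamily of an intersection-closed family with all cardinalities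
divisible by `d` has cardinality divisible by `d`. -/
lemma union_card_dvd (d : ℕ) (ℳ : Finset (Finset α))
    (hclosed : ∀ M₁ ∈ ℳ, ∀ M₂ ∈ ℳ, M₁ ∩ M₂ ∈ ℳ)
    (hdiv : ∀ M ∈ ℳ, d ∣ M.card) :
    ∀ n : ℕ, ∀ 𝒩 : Finset (Finset α), 𝒩.card ≤ n → 𝒩 ⊆ ℳ →
      d ∣ (𝒩.sup id).card := by
  intro n
  induction n with
  | zero =>
    intro 𝒩 hcard _
    have : 𝒩 = ∅ := Finset.card_eq_zero.mp (Nat.le_zero.mp hcard)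
    simp [this]
  | succ n ih =>
    intro 𝒩 hcard hsub
    rcases 𝒩.eq_empty_or_nonempty with rfl | ⟨N, hN⟩
    · simp
    · set 𝒩' := 𝒩.erase N with h𝒩'
      have hsub' : 𝒩' ⊆ ℳ := fun x hx => hsub (Finset.erase_subset _ _ hx)
      have hcard' : 𝒩'.card ≤ n := by
        have h1 : 𝒩'.card < 𝒩.card := Finset.card_erase_lt_of_mem hN
        omega
      have hU' : d ∣ (𝒩'.sup id).card := ih 𝒩' hcard' hsub'
      -- the intersections family
      set 𝒢 := 𝒩'.image (fun S => N ∩ S) with h𝒢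
      have h𝒢sub : 𝒢 ⊆ ℳ := by
        intro x hx
        simp only [h𝒢, Finset.mem_image] at hx
        obtain ⟨S, hS, rfl⟩ := hx
        exact hclosed N (hsub hN) S (hsub' hS)
      have h𝒢card : 𝒢.card ≤ n := le_trans (Finset.card_image_le) hcard'
      have hG : d ∣ (𝒢.sup id).card := ih 𝒢 h𝒢card h𝒢sub
      have hinter : N ∩ 𝒩'.sup id = 𝒢.sup id := by
        ext a
        simp only [Finset.mem_inter, Finset.mem_sup, h𝒢, Finset.mem_image, id]
        constructor
        · rintro ⟨ha, S, hS, haS⟩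
          exact ⟨N ∩ S, ⟨S, hS, rfl⟩, Finset.mem_inter.mpr ⟨ha, haS⟩⟩
        · rintro ⟨x, ⟨S, hS, rfl⟩, hax⟩
          rw [Finset.mem_inter] at hax
          exact ⟨hax.1, S, hS, hax.2⟩
      have hsup : 𝒩.sup id = N ∪ 𝒩'.sup id := by
        conv_lhs => rw [← Finset.insert_erase hN]
        rw [Finset.sup_insert]; rfl
      have key := Finset.card_inter_add_card_union N (𝒩'.sup id)
      have hle : (N ∩ 𝒩'.sup id).card ≤ N.card + (𝒩'.sup id).card := by
        rw [← key]; omega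
      have : (N ∪ 𝒩'.sup id).card = N.card + (𝒩'.sup id).card - (N ∩ 𝒩'.sup id).card := by
        omega
      rw [hsup, this]
      refine Nat.dvd_sub (Nat.dvd_add (hdiv N (hsub hN)) hU') ?_
      rw [hinter]; exact hG

/-- If `ℳ ⊆ 2^[k]` is intersection-closed, `d ∣ k`, and every member as well as every
pairwise intersection of members has cardinality divisible by `d`, then every atom of
`ℳ` (equivalence class of `x ~ y ↔ ∀ M ∈ ℳ, x ∈ M ↔ y ∈ M`) has cardinality divisible
by `d`. -/
theorem atoms_divisible (k d : ℕ) (hd : 0 < d) (hdk : d ∣ k)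
    (ℳ : Finset (Finset (Fin k)))
    (hclosed : ∀ M₁ ∈ ℳ, ∀ M₂ ∈ ℳ, M₁ ∩ M₂ ∈ ℳ)
    (hdiv : ∀ M ∈ ℳ, d ∣ M.card)
    (hdivint : ∀ M₁ ∈ ℳ, ∀ M₂ ∈ ℳ, d ∣ (M₁ ∩ M₂).card) :
    ∀ x : Fin k,
      d ∣ (Finset.univ.filter fun y : Fin k => ∀ M ∈ ℳ, (x ∈ M ↔ y ∈ M)).card := by
  intro x
  set F := ℳ.filter (fun M => x ∈ M) with hF
  set A := F.inf id with hA
  have hAdvd : d ∣ A.card := by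
    rcases F.eq_empty_or_nonempty with h | h
    · have : A = Finset.univ := by simp [hA, h, Finset.inf_empty, Finset.top_eq_univ]
      rw [this, Finset.card_univ, Fintype.card_fin]; exact hdk
    · exact hdiv A (inf_mem_of_closed ℳ hclosed F h (Finset.filter_subset _ _))
  have hxA : x ∈ A := by
    rw [hA, Finset.mem_inf]
    intro M hM
    exact (Finset.mem_filter.mp hM).2
  have hAmem : ∀ M ∈ ℳ, A ∩ M ∈ ℳ := by
    intro M hM
    rcases F.eq_empty_or_nonempty with h | h
    · have : A = Finset.univ := by simp [hA, h, Finset.inf_empty, Finset.top_eq_univ]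
      rw [this]; simpa using hM
    · exact hclosed A (inf_mem_of_closed ℳ hclosed F h (Finset.filter_subset _ _)) M hM
  set G := (ℳ.filter (fun M => x ∉ M)).image (fun M => A ∩ M) with hG
  have hGsub : G ⊆ ℳ := by
    intro S hS
    simp only [hG, Finset.mem_image, Finset.mem_filter] at hS
    obtain ⟨M, ⟨hM, _⟩, rfl⟩ := hS
    exact hAmem M hM
  have hGdvd : d ∣ (G.sup id).card :=
    union_card_dvd d ℳ hclosed hdiv G.card G le_rfl hGsub
  have hGA : G.sup id ⊆ A := by
    intro a ha
    rw [Finset.mem_sup] at ha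
    obtain ⟨S, hS, haS⟩ := ha
    simp only [hG, Finset.mem_image] at hS
    obtain ⟨M, _, rfl⟩ := hS
    exact (Finset.mem_inter.mp haS).1
  have hatom : (Finset.univ.filter fun y : Fin k => ∀ M ∈ ℳ, (x ∈ M ↔ y ∈ M))
      = A \ G.sup id := by
    ext y
    simp only [Finset.mem_filter, Finset.mem_univ, true_and, Finset.mem_sdiff,
      Finset.mem_sup, hG, Finset.mem_image, Finset.mem_filter, id]
    constructor
    · intro hy
      have hyA : y ∈ A := by
        rw [hA, Finset.mem_inf]
        intro M hM
        rw [hF, Finset.mem_filter] at hM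
        exact (hy M hM.1).mp hM.2
      refine ⟨hyA, ?_⟩
      rintro ⟨S, ⟨M, ⟨hM, hxM⟩, rfl⟩, hyS⟩
      exact hxM ((hy M hM).mpr (Finset.mem_inter.mp hyS).2)
    · rintro ⟨hyA, hnot⟩ M hM
      constructor
      · intro hxM
        have : A ≤ id M :=
          Finset.inf_le (Finset.mem_filter.mpr ⟨hM, hxM⟩)
        exact this hyA
      · intro hyM
        by_contra hxM
        exact hnot ⟨A ∩ M, ⟨M, ⟨hM, hxM⟩, rfl⟩, Finset.mem_inter.mpr ⟨hyA, hyM⟩⟩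
  rw [hatom, Finset.card_sdiff_of_subset hGA]
  exact Nat.dvd_sub hAdvd hGdvd
end

section
/- Let $k \geq 2$ and let $\mathcal{F} \subseteq \binom{[n]}{k}$ be a family such that no $k+1$ sets of $\mathcal{F}$ form a $(k+1)$-cluster, meaning: there do not exist distinct $F, F_1, \ldots, F_k \in \mathcal{F}$ with $F \cap F_1 \cap \cdots \cap F_k = \emptyset$ and $|F \cup F_1 \cup \cdots \cup F_k| \leq 2k$. Then for every $F \in \mathcal{F}$ there exists a $(k-1)$-element subset $X \subseteq F$ that is not contained in any other member of $\mathcal{F}$. -/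
open Finset

/-- Füredi–Özkahya: if `𝒻 ⊆ C([n],k)` contains no `(k+1)`-cluster (i.e. no `k+1`
distinct members with empty common intersection and union of size at most `2k`), then
every `F ∈ 𝒻` has a `(k-1)`-element subset contained in no other member of `𝒻`. -/
theorem cluster_free_own_subset (n k : ℕ) (hk : 2 ≤ k)
    (𝒻 : Finset (Finset (Fin n))) (hcard : ∀ F ∈ 𝒻, F.card = k)
    (hfree : ¬ ∃ S ⊆ 𝒻, S.card = k + 1 ∧
      (∀ (hS : S.Nonempty), S.inf' hS id = ∅) ∧ (S.sup id).card ≤ 2 * k) :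
    ∀ F ∈ 𝒻, ∃ X ⊆ F, X.card = k - 1 ∧ ∀ G ∈ 𝒻, G ≠ F → ¬ X ⊆ G := by
  intro F hF
  by_contra h
  push_neg at h
  have hFk : F.card = k := hcard F hF
  have key : ∀ a : Fin n, ∃ G, a ∈ F → (G ∈ 𝒻 ∧ G ≠ F ∧ F.erase a ⊆ G) := by
    intro a
    by_cases ha : a ∈ F
    · have hsub : F.erase a ⊆ F := erase_subset a F
      have hc : (F.erase a).card = k - 1 := by
        rw [card_erase_of_mem ha, hFk]
      obtain ⟨G, hG𝒻, hGne, hGsub⟩ := h (F.erase a) hsub hc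
      exact ⟨G, fun _ => ⟨hG𝒻, hGne, hGsub⟩⟩
    · exact ⟨∅, fun h' => absurd h' ha⟩
  choose g hg using key
  have hgmem : ∀ a ∈ F, g a ∈ 𝒻 := fun a ha => (hg a ha).1
  have hgne : ∀ a ∈ F, g a ≠ F := fun a ha => (hg a ha).2.1
  have hgsub : ∀ a ∈ F, F.erase a ⊆ g a := fun a ha => (hg a ha).2.2
  have hgk : ∀ a ∈ F, (g a).card = k := fun a ha => hcard _ (hgmem a ha)
  have hnot : ∀ a ∈ F, a ∉ g a := by
    intro a ha hag
    have hFsub : F ⊆ g a := by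
      intro x hx
      rcases eq_or_ne x a with rfl | hne
      · exact hag
      · exact hgsub a ha (mem_erase.mpr ⟨hne, hx⟩)
    have : F = g a := eq_of_subset_of_card_le hFsub (by rw [hgk a ha, hFk])
    exact hgne a ha this.symm
  have hinj : Set.InjOn g F := by
    intro a ha b hb hab
    by_contra hne
    have hbga : b ∈ g a := hgsub a ha (mem_erase.mpr ⟨Ne.symm hne, hb⟩)
    rw [hab] at hbga
    exact hnot b hb hbga
  set S := insert F (F.image g) with hS
  have hFnotmem : F ∉ F.image g := by
    intro hFmem
    obtain ⟨a, ha, hga⟩ := mem_image.mp hFmem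
    exact hgne a ha hga
  have hScard : S.card = k + 1 := by
    rw [hS, card_insert_of_notMem hFnotmem, card_image_of_injOn hinj, hFk]
  have hSsub : S ⊆ 𝒻 := by
    intro t ht
    rcases mem_insert.mp ht with rfl | ht
    · exact hF
    · obtain ⟨a, ha, rfl⟩ := mem_image.mp ht
      exact hgmem a ha
  apply hfree
  refine ⟨S, hSsub, hScard, ?_, ?_⟩
  · intro hSne
    rw [eq_empty_iff_forall_notMem]
    intro x hx
    have hxF : x ∈ F := inf'_le (id) (mem_insert_self F (F.image g)) hx
    have hxg : x ∈ g x :=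
      inf'_le (id) (mem_insert_of_mem (mem_image_of_mem g hxF) : g x ∈ S) hx
    exact hnot x hxF hxg
  · have hU : S.sup id ⊆ F ∪ F.biUnion (fun a => g a \ F) := by
      intro x hx
      obtain ⟨t, ht, hxt⟩ := mem_sup.mp hx
      revert hxt
      refine fun hxt => ?_
      rcases mem_insert.mp ht with rfl | ht
      · exact mem_union_left _ hxt
      · obtain ⟨a, ha, rfl⟩ := mem_image.mp ht
        by_cases hxF : x ∈ F
        · exact mem_union_left _ hxF
        · exact mem_union_right _ (mem_biUnion.mpr ⟨a, ha, mem_sdiff.mpr ⟨hxt, hxF⟩⟩)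
    have hsdiff : ∀ a ∈ F, (g a \ F).card ≤ 1 := by
      intro a ha
      have hsub2 : g a \ F ⊆ g a \ F.erase a :=
        sdiff_subset_sdiff (Subset.refl _) (erase_subset a F)
      have hc2 : (g a \ F.erase a).card = 1 := by
        rw [card_sdiff_of_subset (hgsub a ha), hgk a ha, card_erase_of_mem ha, hFk]
        omega
      calc (g a \ F).card ≤ (g a \ F.erase a).card := card_le_card hsub2
        _ = 1 := hc2
    calc (S.sup id).card ≤ (F ∪ F.biUnion (fun a => g a \ F)).card := card_le_card hU
      _ ≤ F.card + (F.biUnion (fun a => g a \ F)).card := card_union_le _ _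
      _ ≤ F.card + ∑ a ∈ F, (g a \ F).card := by
          exact Nat.add_le_add_left (card_biUnion_le) _
      _ ≤ k + ∑ a ∈ F, 1 := by
          rw [hFk]; exact Nat.add_le_add_left (Finset.sum_le_sum hsdiff) _
      _ = k + k := by rw [Finset.sum_const, smul_eq_mul, mul_one, hFk]
      _ = 2 * k := by ring
end
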